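/- For any tautology $\phi$ in the logic with $\neg$ and $\to$, we have $|\phi| \leq -\frac{1}{2}$, where $|\phi| = \|\phi\| - \ell(\phi)/2$, $\|\phi\|$ is the number of distinct variables of $\phi$, and $\ell$ is the length. Moreover, equality $|\phi| = -\frac{1}{2}$ holds if and only if $\phi$ contains no $\neg$, exactly one variable of $\phi$ occurs exactly twice, and every other variable occurs exactly once. For any antilogy $\phi$, $|\phi| \leq -1$. -/

import Mathlib

/-- Well-formed formulae built from variables with negation and implication. -/
inductive Fml (V : Type) : Type
  | var : V → Fml V
  | neg : Fml V → Fml V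
  | imp : Fml V → Fml V → Fml V

namespace Fml
variable {V : Type}

/-- Boolean evaluation under an assignment `v : V → Bool`. -/
def eval (v : V → Bool) : Fml V → Bool
  | var p => v p
  | neg φ => !(eval v φ)
  | imp φ ψ => !(eval v φ) || eval v ψ

/-- The list of variable occurrences (leaves, left to right). -/
def varList : Fml V → List V
  | var p => [p]
  | neg φ => varList φ
  | imp φ ψ => varList φ ++ varList ψ

/-- A formula is negation-free if it contains no `¬`. -/
def NegFree : Fml V → Prop
  | var _ => True
  | neg _ => False
  | imp φ ψ => NegFree φ ∧ NegFree ψ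

/-- The rightmost variable (rightmost leaf). -/
def rightmost : Fml V → V
  | var p => p
  | neg φ => rightmost φ
  | imp _ ψ => rightmost ψ

/-- Whether a formula contains at least one `¬`. -/
def HasNeg : Fml V → Prop
  | var _ => False
  | neg _ => True
  | imp φ ψ => HasNeg φ ∨ HasNeg ψ

/-- Length of a formula. -/
def len : Fml V → ℕ
  | var _ => 1
  | neg φ => len φ + 1
  | imp φ ψ => len φ + len ψ + 1

/-- Number of occurrences of `¬`. -/
def negCount : Fml V → ℕ
  | var _ => 0
  | neg φ => negCount φ + 1
  | imp φ ψ => negCount φ + negCount ψ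

end Fml

/-- The quantity `|φ| = ‖φ‖ - ℓ(φ)/2`, where `‖φ‖` is the number of distinct
variables of `φ`. -/
def Fml.normVal {V : Type} [DecidableEq V] (φ : Fml V) : ℚ :=
  ((Fml.varList φ).dedup.length : ℚ) - (Fml.len φ : ℚ) / 2

/-!
Counting symbols gives `ℓ(φ) + 1 = 2·(variable occurrences) + (number of ¬)`, hence
`2|φ| = 1 - 2·(occurrences - distinct variables) - (number of ¬)`.
A formula in which no variable repeats takes both truth values: the two sides of an implication
have disjoint variables, so assignments making the antecedent true and the consequent false can be
glued. Hence a tautology or antilogy repeats a variable. A ¬-free formula is true when every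
variable is, so an antilogy also contains a ¬. Equality `|φ| = -1/2` therefore means exactly one
repeated occurrence and no ¬.
-/

namespace List
variable {α : Type*} [DecidableEq α]

theorem length_dedup_lt_of_not_nodup {l : List α} (hl : ¬ l.Nodup) :
    l.dedup.length < l.length := by
  have := Multiset.dedup_card_eq_card_iff_nodup (m := (l : Multiset α))
  simp only [Multiset.coe_dedup, Multiset.coe_card, Multiset.coe_nodup] at this
  exact lt_of_le_of_ne (dedup_sublist l).length_le (mt this.1 hl)

theorem length_eq_length_dedup_add_one_iff (l : List α) :
    l.length = l.dedup.length + 1 ↔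
      ∃ p ∈ l, l.count p = 2 ∧ ∀ q ∈ l, q ≠ p → l.count q = 1 := by
  have hle := Multiset.card_le_card_toFinset_add_one_iff (m := (l : Multiset α))
  simp only [Multiset.coe_card, toFinset_coe, card_toFinset,
    Multiset.coe_count] at hle
  have hpos : ∀ q ∈ l, 1 ≤ l.count q := fun q => count_pos_iff.2
  constructor
  · intro h
    have hnd : ¬ l.Nodup := fun hnd => by simp [dedup_eq_self.2 hnd] at h
    obtain ⟨p, hp⟩ : ∃ p, 1 < l.count p := by
      simpa [nodup_iff_count_le_one] using hnd
    have hp2 := (hle.1 h.le p p hp hp).2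
    refine ⟨p, count_pos_iff.1 (by omega), hp2, fun q hq hqp => ?_⟩
    by_contra hq1
    exact hqp (hle.1 h.le q p (by have := hpos q hq; omega) hp).1
  · rintro ⟨p, hp, hp2, hrest⟩
    have hmult : ∀ x, 1 < l.count x → x = p := fun x hx => by
      by_contra hxp
      have := hrest x (count_pos_iff.1 (by omega)) hxp
      omega
    have h1 := hle.2 fun x y hx hy => ⟨(hmult x hx).trans (hmult y hy).symm, hmult x hx ▸ hp2⟩
    have h2 := length_dedup_lt_of_not_nodup (l := l)
      (by rw [nodup_iff_count_le_one]; intro h; have := h p; omega)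
    omega

end List

namespace Fml
variable {V : Type}

theorem len_add_one (φ : Fml V) : len φ + 1 = 2 * (varList φ).length + negCount φ := by
  induction φ with
  | var p => rfl
  | neg φ ih => simp only [len, varList, negCount]; omega
  | imp φ ψ ihφ ihψ => simp only [len, varList, negCount, List.length_append]; omega

section normVal
variable [DecidableEq V] (φ : Fml V) (n : ℕ)

theorem normVal_eq : normVal φ =
    (2 * (varList φ).dedup.length + 1 - (2 * (varList φ).length + negCount φ)) / 2 := by
  have h : (len φ + 1 : ℚ) = 2 * (varList φ).length + negCount φ := mod_cast len_add_one φ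
  rw [normVal, ← h]
  ring

theorem normVal_le_iff : normVal φ ≤ (1 - n) / 2 ↔
    2 * (varList φ).dedup.length + n ≤ 2 * (varList φ).length + negCount φ := by
  rw [← Nat.cast_le (α := ℚ), normVal_eq]
  push_cast
  constructor <;> intro h <;> linarith

theorem normVal_eq_iff : normVal φ = (1 - n) / 2 ↔
    2 * (varList φ).dedup.length + n = 2 * (varList φ).length + negCount φ := by
  rw [← Nat.cast_inj (R := ℚ), normVal_eq]
  push_cast
  constructor <;> intro h <;> linarith

end normVal

theorem negCount_eq_zero_iff (φ : Fml V) : negCount φ = 0 ↔ ¬ HasNeg φ := by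
  induction φ with
  | var p => simp [negCount, HasNeg]
  | neg φ ih => simp [negCount, HasNeg]
  | imp φ ψ ihφ ihψ => simp only [negCount, HasNeg, Nat.add_eq_zero_iff, ihφ, ihψ, not_or]

theorem eval_congr {v w : V → Bool} (φ : Fml V) (h : ∀ p ∈ varList φ, v p = w p) :
    eval v φ = eval w φ := by
  induction φ with
  | var p => exact h p (List.mem_singleton_self p)
  | neg φ ih => simp only [eval, ih h]
  | imp φ ψ ihφ ihψ =>
    simp only [varList, List.mem_append] at h
    simp only [eval, ihφ fun p hp => h p (.inl hp), ihψ fun p hp => h p (.inr hp)]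

theorem eval_const_true_of_not_hasNeg {φ : Fml V} (h : ¬ HasNeg φ) :
    eval (fun _ => true) φ = true := by
  induction φ with
  | var p => rfl
  | neg φ ih => exact absurd trivial h
  | imp φ ψ ihφ ihψ =>
    simp only [HasNeg, not_or] at h
    simp [eval, ihψ h.2]

theorem exists_eval_eq_of_nodup {φ : Fml V} (hφ : (varList φ).Nodup) (b : Bool) :
    ∃ v, eval v φ = b := by
  classical
  induction φ generalizing b with
  | var p => exact ⟨fun _ => b, rfl⟩
  | neg φ ih =>
    obtain ⟨v, hv⟩ := ih hφ (!b)
    exact ⟨v, by simp [eval, hv]⟩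
  | imp φ ψ ihφ ihψ =>
    obtain ⟨hφ, hψ, hdisj⟩ := List.nodup_append.1 hφ
    cases b with
    | true =>
      obtain ⟨v, hv⟩ := ihψ hψ true
      exact ⟨v, by simp [eval, hv]⟩
    | false =>
      obtain ⟨v, hv⟩ := ihφ hφ true
      obtain ⟨w, hw⟩ := ihψ hψ false
      let u p := if p ∈ varList φ then v p else w p
      have huφ : eval u φ = true := hv ▸ eval_congr φ fun p hp => if_pos hp
      have huψ : eval u ψ = false :=
        hw ▸ eval_congr ψ fun p hp => if_neg fun hp' => hdisj p hp' p hp rfl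
      exact ⟨u, by simp [eval, huφ, huψ]⟩

theorem not_nodup_varList_of_forall_eval_eq {φ : Fml V} {b : Bool}
    (h : ∀ v, eval v φ = b) : ¬ (varList φ).Nodup := fun hφ => by
  obtain ⟨v, hv⟩ := exists_eval_eq_of_nodup hφ (!b)
  simp [h v] at hv

theorem hasNeg_of_forall_eval_eq_false {φ : Fml V} (h : ∀ v, eval v φ = false) :
    HasNeg φ := by
  by_contra hφ
  simpa [h] using eval_const_true_of_not_hasNeg hφ

end Fml

theorem normVal_tautology_antilogy {V : Type} [DecidableEq V] (φ : Fml V) :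
    ((∀ v : V → Bool, Fml.eval v φ = true) →
      (Fml.normVal φ ≤ -(1 / 2) ∧
        (Fml.normVal φ = -(1 / 2) ↔
          (¬ Fml.HasNeg φ ∧
            ∃ p ∈ Fml.varList φ, (Fml.varList φ).count p = 2 ∧
              ∀ q ∈ Fml.varList φ, q ≠ p → (Fml.varList φ).count q = 1)))) ∧
    ((∀ v : V → Bool, Fml.eval v φ = false) → Fml.normVal φ ≤ -1) := by
  have hrepeat {b : Bool} (h : ∀ v, Fml.eval v φ = b) :
      (Fml.varList φ).dedup.length + 1 ≤ (Fml.varList φ).length :=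
    List.length_dedup_lt_of_not_nodup (Fml.not_nodup_varList_of_forall_eval_eq h)
  refine ⟨fun htaut => ⟨?_, ?_⟩, fun hanti => ?_⟩
  · have hiff := Fml.normVal_le_iff φ 2
    norm_num at hiff
    rw [hiff]
    have hrep := hrepeat htaut
    omega
  · have hiff := Fml.normVal_eq_iff φ 2
    norm_num at hiff
    rw [hiff, ← Fml.negCount_eq_zero_iff, ← List.length_eq_length_dedup_add_one_iff]
    have hrep := hrepeat htaut
    omega
  · have hiff := Fml.normVal_le_iff φ 3
    norm_num at hiff
    rw [hiff]
    have hrep := hrepeat hanti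
    have hneg := (Fml.negCount_eq_zero_iff φ).not_left.2 (Fml.hasNeg_of_forall_eval_eq_false hanti)
    omega
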